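/- arXiv:1706.07384 — 8 statements merged into one kernel-verified Lean document; each statement's English description precedes it below -/
import Mathlib

section
/- Let (P,≤) be a nonempty chain-complete poset (every nonempty chain in P has a least upper bound in P). Let F : P → 2^P∖{∅} be a set-valued map such that (A1) F is order-increasing upward, (A2) F(x) is universally inductive in P for every x ∈ P, and (A3) there exist y' ∈ P and v' ∈ F(y') with y' ≤ v'. Then the fixed point set {x ∈ P : x ∈ F(x)} is nonempty and inductive. -/
/-- A subset `A` of a preorder is *inductive*: every nonempty chain contained in `A`
has an upper bound belonging to `A`. -/
def IsInductiveSet {α : Type*} [Preorder α] (A : Set α) : Prop :=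
  ∀ c : Set α, c ⊆ A → c.Nonempty → IsChain (· ≤ ·) c → ∃ b ∈ A, ∀ x ∈ c, x ≤ b

/-- Dual notion: every nonempty chain contained in `A` has a lower bound belonging to `A`. -/
def IsCoinductiveSet {α : Type*} [Preorder α] (A : Set α) : Prop :=
  ∀ c : Set α, c ⊆ A → c.Nonempty → IsChain (· ≤ ·) c → ∃ b ∈ A, ∀ x ∈ c, b ≤ x

/-- `A` is *universally inductive in `P`*: every nonempty chain contained in `P`, each of
whose elements is bounded above by some element of `A`, has an upper bound belonging to `A`. -/
def IsUnivInductiveIn {α : Type*} [Preorder α] (P A : Set α) : Prop :=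
  ∀ c : Set α, c ⊆ P → c.Nonempty → IsChain (· ≤ ·) c →
    (∀ x ∈ c, ∃ a ∈ A, x ≤ a) → ∃ b ∈ A, ∀ x ∈ c, x ≤ b

/-- Dual notion of universal inductivity (in the order-dual of `P`). -/
def IsUnivCoinductiveIn {α : Type*} [Preorder α] (P A : Set α) : Prop :=
  ∀ c : Set α, c ⊆ P → c.Nonempty → IsChain (· ≤ ·) c →
    (∀ x ∈ c, ∃ a ∈ A, a ≤ x) → ∃ b ∈ A, ∀ x ∈ c, b ≤ x

/-- `A` is a *chain-complete subset*: every nonempty chain contained in `A` has a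
least upper bound in the ambient poset, and this least upper bound belongs to `A`. -/
def IsChainCompleteIn {α : Type*} [Preorder α] (A : Set α) : Prop :=
  ∀ c : Set α, c ⊆ A → c.Nonempty → IsChain (· ≤ ·) c → ∃ b ∈ A, IsLUB c b

/-- A set-valued map `F` with domain `C` is *order-increasing upward*. -/
def IncUpwardOn {α β : Type*} [Preorder α] [Preorder β] (C : Set α) (F : α → Set β) : Prop :=
  ∀ ⦃x₁⦄, x₁ ∈ C → ∀ ⦃x₂⦄, x₂ ∈ C → x₁ ≤ x₂ → ∀ z ∈ F x₁, ∃ w ∈ F x₂, z ≤ w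

/-- A set-valued map `F` with domain `C` is *order-increasing downward*. -/
def IncDownwardOn {α β : Type*} [Preorder α] [Preorder β] (C : Set α) (F : α → Set β) : Prop :=
  ∀ ⦃x₁⦄, x₁ ∈ C → ∀ ⦃x₂⦄, x₂ ∈ C → x₁ ≤ x₂ → ∀ w ∈ F x₂, ∃ z ∈ F x₁, z ≤ w

/-- Theorem 3.1 of [9], part (i). -/
theorem fixedPointSet_nonempty_inductive {P : Type*} [PartialOrder P] [Nonempty P]
    (hP : ∀ c : Set P, c.Nonempty → IsChain (· ≤ ·) c → ∃ b, IsLUB c b)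
    (F : P → Set P) (hFne : ∀ x, (F x).Nonempty)
    (hA1 : IncUpwardOn Set.univ F)
    (hA2 : ∀ x, IsUnivInductiveIn Set.univ (F x))
    (y' v' : P) (hv' : v' ∈ F y') (hy'v' : y' ≤ v') :
    {x : P | x ∈ F x}.Nonempty ∧ IsInductiveSet {x : P | x ∈ F x} := by
  -- key lemma: from any b with ∃ v ∈ F b, b ≤ v, there is a fixed point above b
  have key : ∀ b : P, (∃ v ∈ F b, b ≤ v) → ∃ m, m ∈ F m ∧ b ≤ m := by
    intro b hb
    set S : Set P := {x | b ≤ x ∧ ∃ v ∈ F x, x ≤ v} with hS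
    have hbS : b ∈ S := ⟨le_rfl, hb⟩
    have hzorn : ∀ c ⊆ S, IsChain (· ≤ ·) c → ∀ y ∈ c, ∃ ub ∈ S, ∀ z ∈ c, z ≤ ub := by
      intro c hcS hc y hy
      obtain ⟨b', hb'⟩ := hP c ⟨y, hy⟩ hc
      have hbb' : b ≤ b' := le_trans (hcS hy).1 (hb'.1 hy)
      have hbound : ∀ x ∈ c, ∃ a ∈ F b', x ≤ a := by
        intro x hx
        obtain ⟨v, hv, hxv⟩ := (hcS hx).2
        obtain ⟨w, hw, hvw⟩ := hA1 (Set.mem_univ x) (Set.mem_univ b') (hb'.1 hx) v hv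
        exact ⟨w, hw, le_trans hxv hvw⟩
      obtain ⟨u, hu, hub⟩ := hA2 b' c (Set.subset_univ c) ⟨y, hy⟩ hc hbound
      have hb'u : b' ≤ u := hb'.2 hub
      exact ⟨b', ⟨hbb', u, hu, hb'u⟩, fun z hz => hb'.1 hz⟩
    obtain ⟨m, hbm, hmS, hmax⟩ := zorn_le_nonempty₀ S hzorn b hbS
    obtain ⟨v, hv, hmv⟩ := hmS.2
    have hvS : v ∈ S := by
      obtain ⟨w, hw, hvw⟩ := hA1 (Set.mem_univ m) (Set.mem_univ v) hmv v hv
      exact ⟨le_trans hmS.1 hmv, w, hw, hvw⟩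
    have : v = m := le_antisymm (hmax hvS hmv) hmv
    exact ⟨m, this ▸ hv, hbm⟩
  constructor
  · obtain ⟨m, hm, _⟩ := key y' ⟨v', hv', hy'v'⟩
    exact ⟨m, hm⟩
  · intro c hcF hcne hc
    obtain ⟨b, hb⟩ := hP c hcne hc
    have hbound : ∀ x ∈ c, ∃ a ∈ F b, x ≤ a := by
      intro x hx
      obtain ⟨w, hw, hxw⟩ := hA1 (Set.mem_univ x) (Set.mem_univ b) (hb.1 hx) x (hcF hx)
      exact ⟨w, hw, hxw⟩
    obtain ⟨u, hu, hub⟩ := hA2 b c (Set.subset_univ c) hcne hc hbound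
    obtain ⟨m, hm, hbm⟩ := key b ⟨u, hu, hb.2 hub⟩
    exact ⟨m, hm, fun x hx => le_trans (hb.1 hx) hbm⟩
end

section
/- Let (P,≤) be a nonempty chain-complete poset (every nonempty chain in P has a least upper bound in P). Let F : P → 2^P∖{∅} be a set-valued map such that (A1) F is order-increasing upward, (A2) F(x) is universally inductive in P for every x ∈ P, and (A3) there exist y' ∈ P and v' ∈ F(y') with y' ≤ v'. Then the set {x ∈ P : x ∈ F(x) and y' ≤ x} is nonempty and inductive, and F has a maximal fixed point x'' (a maximal element of the fixed point set) satisfying y' ≤ x''. -/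
theorem aux_exists_fixed_above {P : Type*} [PartialOrder P]
    (hP : ∀ c : Set P, c.Nonempty → IsChain (· ≤ ·) c → ∃ b, IsLUB c b)
    (F : P → Set P)
    (hA1 : IncUpwardOn Set.univ F)
    (hA2 : ∀ x, IsUnivInductiveIn Set.univ (F x))
    (b : P) (hb : ∃ v ∈ F b, b ≤ v) :
    ∃ m, m ∈ F m ∧ b ≤ m := by
  set D : Set P := {x | ∃ v ∈ F x, x ≤ v} with hD
  have hchain : ∀ c ⊆ D, IsChain (· ≤ ·) c → ∀ y ∈ c, ∃ ub ∈ D, ∀ z ∈ c, z ≤ ub := by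
    intro c hcD hc y hy
    obtain ⟨s, hs⟩ := hP c ⟨y, hy⟩ hc
    have hbound : ∀ x ∈ c, ∃ a ∈ F s, x ≤ a := by
      intro x hx
      obtain ⟨v, hv, hxv⟩ := hcD hx
      obtain ⟨w, hw, hvw⟩ := hA1 (Set.mem_univ x) (Set.mem_univ s) (hs.1 hx) v hv
      exact ⟨w, hw, hxv.trans hvw⟩
    obtain ⟨u, hu, huub⟩ := hA2 s c (Set.subset_univ c) ⟨y, hy⟩ hc hbound
    exact ⟨s, ⟨u, hu, hs.2 huub⟩, fun z hz => hs.1 hz⟩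
  obtain ⟨m, hbm, hmD, hmax⟩ := zorn_le_nonempty₀ D hchain b hb
  obtain ⟨v, hv, hmv⟩ := hmD
  have hvD : v ∈ D := by
    obtain ⟨w, hw, hvw⟩ := hA1 (Set.mem_univ m) (Set.mem_univ v) hmv v hv
    exact ⟨w, hw, hvw⟩
  have hmvv : m = v := le_antisymm hmv (hmax hvD hmv)
  exact ⟨m, hmvv ▸ hv, hbm⟩

/-- Theorem 3.1 of [9], part (ii). -/
theorem fixedPointSet_above_nonempty_inductive_and_maximal {P : Type*} [PartialOrder P]
    [Nonempty P]
    (hP : ∀ c : Set P, c.Nonempty → IsChain (· ≤ ·) c → ∃ b, IsLUB c b)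
    (F : P → Set P) (hFne : ∀ x, (F x).Nonempty)
    (hA1 : IncUpwardOn Set.univ F)
    (hA2 : ∀ x, IsUnivInductiveIn Set.univ (F x))
    (y' v' : P) (hv' : v' ∈ F y') (hy'v' : y' ≤ v') :
    ({x : P | x ∈ F x ∧ y' ≤ x}.Nonempty ∧ IsInductiveSet {x : P | x ∈ F x ∧ y' ≤ x}) ∧
      ∃ x'', Maximal (· ∈ {x : P | x ∈ F x}) x'' ∧ y' ≤ x'' := by
  -- a sup of a chain whose elements all admit points above in F of themselves
  have key : ∀ b : P, (∃ v ∈ F b, b ≤ v) → ∃ m, m ∈ F m ∧ b ≤ m :=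
    aux_exists_fixed_above hP F hA1 hA2
  -- chains of "sub-fixed" points have sups that are sub-fixed
  have supstep : ∀ c : Set P, c.Nonempty → IsChain (· ≤ ·) c →
      (∀ x ∈ c, ∃ v ∈ F x, x ≤ v) → ∃ s, (∃ u ∈ F s, s ≤ u) ∧ ∀ x ∈ c, x ≤ s := by
    intro c hcne hc hsub
    obtain ⟨s, hs⟩ := hP c hcne hc
    have hbound : ∀ x ∈ c, ∃ a ∈ F s, x ≤ a := by
      intro x hx
      obtain ⟨v, hv, hxv⟩ := hsub x hx
      obtain ⟨w, hw, hvw⟩ := hA1 (Set.mem_univ x) (Set.mem_univ s) (hs.1 hx) v hv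
      exact ⟨w, hw, hxv.trans hvw⟩
    obtain ⟨u, hu, huub⟩ := hA2 s c (Set.subset_univ c) hcne hc hbound
    exact ⟨s, ⟨u, hu, hs.2 huub⟩, fun x hx => hs.1 hx⟩
  obtain ⟨x0, hx0F, hy'x0⟩ := key y' ⟨v', hv', hy'v'⟩
  refine ⟨⟨⟨x0, hx0F, hy'x0⟩, ?_⟩, ?_⟩
  · -- inductive
    intro c hcA hcne hc
    obtain ⟨s, hsub, hsub2⟩ := supstep c hcne hc
      (fun x hx => ⟨x, (hcA hx).1, le_rfl⟩)
    obtain ⟨m, hmF, hsm⟩ := key s hsub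
    obtain ⟨z, hz⟩ := hcne
    exact ⟨m, ⟨hmF, (hcA hz).2.trans ((hsub2 z hz).trans hsm)⟩,
      fun x hx => (hsub2 x hx).trans hsm⟩
  · -- maximal fixed point
    have hzorn : ∀ c ⊆ {x : P | x ∈ F x}, IsChain (· ≤ ·) c → ∀ y ∈ c,
        ∃ ub ∈ {x : P | x ∈ F x}, ∀ z ∈ c, z ≤ ub := by
      intro c hcS hc y hy
      obtain ⟨s, hsub, hsub2⟩ := supstep c ⟨y, hy⟩ hc
        (fun x hx => ⟨x, hcS hx, le_rfl⟩)
      obtain ⟨m, hmF, hsm⟩ := key s hsub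
      exact ⟨m, hmF, fun z hz => (hsub2 z hz).trans hsm⟩
    obtain ⟨m, hx0m, hmax⟩ := zorn_le_nonempty₀ {x : P | x ∈ F x} hzorn x0 hx0F
    exact ⟨m, hmax, hy'x0.trans hx0m⟩
end

section
/- Let (X,≤X), (Y,≤Y), (U,≤U) be posets, let C ⊆ X and D ⊆ Y be nonempty chain-complete subsets, let T : C × D → U, F : C → 2^D∖{∅}, G : D → 2^C∖{∅}, and let φ, ψ be the order-optimization mappings of (T,F,G). Suppose φ and ψ have nonempty values, are order-increasing upward, and φ(x) is universally inductive in D for every x ∈ C while ψ(y) is universally inductive in C for every y ∈ D. If there exist (x',y') ∈ C × D, u' ∈ φ(x') and z' ∈ ψ(y') with x' ≤X z' and y' ≤Y u', then the solution set S(T,F,G) is a nonempty inductive subset of C × D with the componentwise order, and ROEP(T,F,G) has a maximal solution (a maximal element of S(T,F,G)). -/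
/-- The order-optimization mapping `φ` of the data `(T, F)`:
`φ(x) = {y ∈ F(x) : T(x,y) is a minimal element of {T(x,y') : y' ∈ F(x)}}`. -/
def ooPhi {X Y U : Type*} [Preorder U] (T : X → Y → U) (F : X → Set Y) (x : X) : Set Y :=
  {y ∈ F x | Minimal (· ∈ (fun y' => T x y') '' F x) (T x y)}

/-- The order-optimization mapping `ψ` of the data `(T, G)`:
`ψ(y) = {x ∈ G(y) : T(x,y) is a maximal element of {T(x',y) : x' ∈ G(y)}}`. -/
def ooPsi {X Y U : Type*} [Preorder U] (T : X → Y → U) (G : Y → Set X) (y : Y) : Set X :=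
  {x ∈ G y | Maximal (· ∈ (fun x' => T x' y) '' G y) (T x y)}

/-- The solution set `S(T,F,G)` of the constrained ordered equilibrium problem
`ROEP(T,F,G)`, as a subset of `C × D` with the componentwise order. -/
def SolSet {X Y U : Type*} [Preorder U] (T : X → Y → U) (F : X → Set Y) (G : Y → Set X)
    (C : Set X) (D : Set Y) : Set (X × Y) :=
  {p | p.1 ∈ C ∧ p.2 ∈ D ∧ p.1 ∈ G p.2 ∧ p.2 ∈ F p.1 ∧
    Maximal (· ∈ (fun x' => T x' p.2) '' G p.2) (T p.1 p.2) ∧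
    Minimal (· ∈ (fun y' => T p.1 y') '' F p.1) (T p.1 p.2)}

/-! Solutions of `ROEP(T,F,G)` are exactly the fixed points `p ∈ Φ p` of the set-valued map
`Φ (x, y) = ψ y ×ˢ φ x` on the chain-complete set `C ×ˢ D`, and `Φ` inherits upward monotonicity
and universally inductive values from `φ` and `ψ`.

For such a map the points `p` lying below some `q ∈ Φ p` form an inductive set: if `b` is the
supremum of a chain of them, monotonicity bounds every element of the chain by an element of
`Φ b`, so universal inductivity gives `w ∈ Φ b` above the chain, whence `b ≤ w`. By Zorn's lemma
there is a maximal such point `m ≤ q ∈ Φ m`; then `q` is again such a point, so `m = q` is a fixed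
point, maximal among all fixed points. Running this above the supremum of a chain of fixed points
shows that the fixed points form an inductive set. -/

section Product

variable {X Y : Type*} [Preorder X] [Preorder Y]

theorem IsChainCompleteIn.prod {C : Set X} {D : Set Y} (hC : IsChainCompleteIn C)
    (hD : IsChainCompleteIn D) : IsChainCompleteIn (C ×ˢ D) := by
  intro c hcCD hc hchain
  obtain ⟨b₁, hb₁, hlub₁⟩ := hC (Prod.fst '' c) (by rintro _ ⟨p, hp, rfl⟩; exact (hcCD hp).1)
    (hc.image _) (monotone_fst.isChain_image hchain)
  obtain ⟨b₂, hb₂, hlub₂⟩ := hD (Prod.snd '' c) (by rintro _ ⟨p, hp, rfl⟩; exact (hcCD hp).2)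
    (hc.image _) (monotone_snd.isChain_image hchain)
  exact ⟨(b₁, b₂), ⟨hb₁, hb₂⟩, isLUB_prod.2 ⟨hlub₁, hlub₂⟩⟩

theorem IsUnivInductiveIn.prod {C A : Set X} {D B : Set Y} (hA : IsUnivInductiveIn C A)
    (hB : IsUnivInductiveIn D B) : IsUnivInductiveIn (C ×ˢ D) (A ×ˢ B) := by
  intro c hcCD hc hchain hbdd
  obtain ⟨w₁, hw₁, hub₁⟩ := hA (Prod.fst '' c) (by rintro _ ⟨p, hp, rfl⟩; exact (hcCD hp).1)
    (hc.image _) (monotone_fst.isChain_image hchain) (by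
      rintro _ ⟨p, hp, rfl⟩
      obtain ⟨a, ha, hpa⟩ := hbdd p hp
      exact ⟨a.1, ha.1, hpa.1⟩)
  obtain ⟨w₂, hw₂, hub₂⟩ := hB (Prod.snd '' c) (by rintro _ ⟨p, hp, rfl⟩; exact (hcCD hp).2)
    (hc.image _) (monotone_snd.isChain_image hchain) (by
      rintro _ ⟨p, hp, rfl⟩
      obtain ⟨a, ha, hpa⟩ := hbdd p hp
      exact ⟨a.2, ha.2, hpa.2⟩)
  exact ⟨(w₁, w₂), ⟨hw₁, hw₂⟩, fun p hp => ⟨hub₁ _ ⟨p, hp, rfl⟩, hub₂ _ ⟨p, hp, rfl⟩⟩⟩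

theorem IncUpwardOn.crossProd {C : Set X} {D : Set Y} {φ : X → Set Y} {ψ : Y → Set X}
    (hφ : IncUpwardOn C φ) (hψ : IncUpwardOn D ψ) :
    IncUpwardOn (C ×ˢ D) (fun p => ψ p.2 ×ˢ φ p.1) := by
  rintro p₁ ⟨hx₁, hy₁⟩ p₂ ⟨hx₂, hy₂⟩ ⟨hle₁, hle₂⟩ z ⟨hz₁, hz₂⟩
  obtain ⟨w₁, hw₁, hzw₁⟩ := hψ hy₁ hy₂ hle₂ z.1 hz₁
  obtain ⟨w₂, hw₂, hzw₂⟩ := hφ hx₁ hx₂ hle₁ z.2 hz₂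
  exact ⟨(w₁, w₂), ⟨hw₁, hw₂⟩, hzw₁, hzw₂⟩

end Product

section FixedPoints

variable {α : Type*} [PartialOrder α] {P : Set α} {Φ : α → Set α}

theorem isInductiveSet_subFixedPoints (hP : IsChainCompleteIn P) (hΦ : IncUpwardOn P Φ)
    (hUI : ∀ p ∈ P, IsUnivInductiveIn P (Φ p)) :
    IsInductiveSet {p ∈ P | ∃ q ∈ Φ p, p ≤ q} := by
  intro c hc hcne hchain
  have hcP : c ⊆ P := fun p hp => (hc hp).1
  obtain ⟨b, hbP, hlub⟩ := hP c hcP hcne hchain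
  have hbdd : ∀ p ∈ c, ∃ w ∈ Φ b, p ≤ w := by
    intro p hp
    obtain ⟨hpP, q, hq, hpq⟩ := hc hp
    obtain ⟨w, hw, hqw⟩ := hΦ hpP hbP (hlub.1 hp) q hq
    exact ⟨w, hw, hpq.trans hqw⟩
  obtain ⟨w, hw, hcw⟩ := hUI b hbP c hcP hcne hchain hbdd
  exact ⟨b, ⟨hbP, w, hw, hlub.2 hcw⟩, fun p hp => hlub.1 hp⟩

theorem exists_maximal_fixedPoint_ge (hΦP : ∀ p ∈ P, Φ p ⊆ P) (hP : IsChainCompleteIn P)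
    (hΦ : IncUpwardOn P Φ) (hUI : ∀ p ∈ P, IsUnivInductiveIn P (Φ p))
    {a q : α} (ha : a ∈ P) (hq : q ∈ Φ a) (haq : a ≤ q) :
    ∃ m, a ≤ m ∧ Maximal (· ∈ {p ∈ P | p ∈ Φ p}) m := by
  obtain ⟨m, ham, hmax⟩ := zorn_le_nonempty₀ _
    (fun c hc hchain p hp => isInductiveSet_subFixedPoints hP hΦ hUI c hc ⟨p, hp⟩ hchain)
    a ⟨ha, q, hq, haq⟩
  obtain ⟨hmP, r, hr, hmr⟩ := hmax.1
  have hrP : r ∈ P := hΦP m hmP hr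
  obtain ⟨s, hs, hrs⟩ := hΦ hmP hrP hmr r hr
  obtain rfl : m = r := hmax.eq_of_le ⟨hrP, s, hs, hrs⟩ hmr
  exact ⟨m, ham, ⟨hmP, hr⟩, fun n hn hmn => hmax.2 ⟨hn.1, n, hn.2, le_rfl⟩ hmn⟩

theorem isInductiveSet_fixedPoints (hΦP : ∀ p ∈ P, Φ p ⊆ P) (hP : IsChainCompleteIn P)
    (hΦ : IncUpwardOn P Φ) (hUI : ∀ p ∈ P, IsUnivInductiveIn P (Φ p)) :
    IsInductiveSet {p ∈ P | p ∈ Φ p} := by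
  intro c hc hcne hchain
  obtain ⟨b, ⟨hbP, q, hq, hbq⟩, hcb⟩ := isInductiveSet_subFixedPoints hP hΦ hUI c
    (fun p hp => ⟨(hc hp).1, p, (hc hp).2, le_rfl⟩) hcne hchain
  obtain ⟨m, hbm, hm⟩ := exists_maximal_fixedPoint_ge hΦP hP hΦ hUI hbP hq hbq
  exact ⟨m, hm.1, fun p hp => (hcb p hp).trans hbm⟩

end FixedPoints

theorem solSet_eq_fixedPoints {X Y U : Type*} [Preorder U] (T : X → Y → U) (F : X → Set Y)
    (G : Y → Set X) (C : Set X) (D : Set Y) :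
    SolSet T F G C D = {p ∈ C ×ˢ D | p ∈ ooPsi T G p.2 ×ˢ ooPhi T F p.1} := by
  ext p
  simp only [SolSet, ooPhi, ooPsi, Set.mem_ofPred_eq, Set.mem_prod]
  tauto

theorem ROEP_solvable_general {X Y U : Type*} [PartialOrder X] [PartialOrder Y] [PartialOrder U]
    (C : Set X) (D : Set Y)
    (T : X → Y → U) (F : X → Set Y) (G : Y → Set X)
    (hF : ∀ x ∈ C, (F x).Nonempty ∧ F x ⊆ D)
    (hG : ∀ y ∈ D, (G y).Nonempty ∧ G y ⊆ C)
    (hCcc : IsChainCompleteIn C) (hDcc : IsChainCompleteIn D)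
    (hphiInc : IncUpwardOn C (ooPhi T F))
    (hpsiInc : IncUpwardOn D (ooPsi T G))
    (hphiUI : ∀ x ∈ C, IsUnivInductiveIn D (ooPhi T F x))
    (hpsiUI : ∀ y ∈ D, IsUnivInductiveIn C (ooPsi T G y))
    (x' : X) (y' : Y) (hx' : x' ∈ C) (hy' : y' ∈ D)
    (u' : Y) (hu' : u' ∈ ooPhi T F x') (z' : X) (hz' : z' ∈ ooPsi T G y')
    (hx'z' : x' ≤ z') (hy'u' : y' ≤ u') :
    (SolSet T F G C D).Nonempty ∧ IsInductiveSet (SolSet T F G C D) ∧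
      ∃ p : X × Y, Maximal (· ∈ SolSet T F G C D) p := by
  have hΦP : ∀ p ∈ C ×ˢ D, ooPsi T G p.2 ×ˢ ooPhi T F p.1 ⊆ C ×ˢ D :=
    fun p hp q hq => ⟨(hG p.2 hp.2).2 hq.1.1, (hF p.1 hp.1).2 hq.2.1⟩
  have hP := hCcc.prod hDcc
  have hΦ := hphiInc.crossProd hpsiInc
  have hUI : ∀ p ∈ C ×ˢ D, IsUnivInductiveIn (C ×ˢ D) (ooPsi T G p.2 ×ˢ ooPhi T F p.1) :=
    fun p hp => (hpsiUI p.2 hp.2).prod (hphiUI p.1 hp.1)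
  obtain ⟨m, -, hm⟩ := exists_maximal_fixedPoint_ge (a := (x', y')) (q := (z', u'))
    hΦP hP hΦ hUI ⟨hx', hy'⟩ ⟨hz', hu'⟩ ⟨hx'z', hy'u'⟩
  rw [solSet_eq_fixedPoints]
  exact ⟨⟨m, hm.1⟩, isInductiveSet_fixedPoints hΦP hP hΦ hUI, m, hm⟩

/-- Theorem 3.1. -/
theorem ROEP_solvable {X Y U : Type*} [PartialOrder X] [PartialOrder Y] [PartialOrder U]
    (C : Set X) (D : Set Y) (hCne : C.Nonempty) (hDne : D.Nonempty)
    (T : X → Y → U) (F : X → Set Y) (G : Y → Set X)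
    (hF : ∀ x ∈ C, (F x).Nonempty ∧ F x ⊆ D)
    (hG : ∀ y ∈ D, (G y).Nonempty ∧ G y ⊆ C)
    (hCcc : IsChainCompleteIn C) (hDcc : IsChainCompleteIn D)
    (hphiNe : ∀ x ∈ C, (ooPhi T F x).Nonempty)
    (hpsiNe : ∀ y ∈ D, (ooPsi T G y).Nonempty)
    (hphiInc : IncUpwardOn C (ooPhi T F))
    (hpsiInc : IncUpwardOn D (ooPsi T G))
    (hphiUI : ∀ x ∈ C, IsUnivInductiveIn D (ooPhi T F x))
    (hpsiUI : ∀ y ∈ D, IsUnivInductiveIn C (ooPsi T G y))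
    (x' : X) (y' : Y) (hx' : x' ∈ C) (hy' : y' ∈ D)
    (u' : Y) (hu' : u' ∈ ooPhi T F x') (z' : X) (hz' : z' ∈ ooPsi T G y')
    (hx'z' : x' ≤ z') (hy'u' : y' ≤ u') :
    (SolSet T F G C D).Nonempty ∧ IsInductiveSet (SolSet T F G C D) ∧
      ∃ p : X × Y, Maximal (· ∈ SolSet T F G C D) p :=
  ROEP_solvable_general C D T F G hF hG hCcc hDcc hphiInc hpsiInc hphiUI hpsiUI x' y' hx' hy' u' hu'
    z' hz' hx'z' hy'u'
end

section
/- Let (X,≤X), (Y,≤Y), (U,≤U) be posets, let C ⊆ X and D ⊆ Y be nonempty chain-complete subsets, let T : C × D → U, F : C → 2^D∖{∅}, G : D → 2^C∖{∅}, and let φ, ψ be the order-optimization mappings of (T,F,G). Suppose that for every x ∈ C the set φ(x) is a singleton {φ̂(x)} and for every y ∈ D the set ψ(y) is a singleton {ψ̂(y)}, and that the functions φ̂ : C → D and ψ̂ : D → C are order-increasing (x1 ≤X x2 implies φ̂(x1) ≤Y φ̂(x2), and y1 ≤Y y2 implies ψ̂(y1) ≤X ψ̂(y2)). If there exists (x',y')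 ∈ C × D with x' ≤X ψ̂(y') and y' ≤Y φ̂(x'), then S(T,F,G) is nonempty and inductive in C × D with the componentwise order, and ROEP(T,F,G) has a maximal solution. -/
section AuxROEP

variable {α β : Type*} [Preorder α] [Preorder β]

lemma prod_isChainCompleteIn {C : Set α} {D : Set β} (hC : IsChainCompleteIn C)
    (hD : IsChainCompleteIn D) : IsChainCompleteIn (C ×ˢ D) := by
  intro c hc hne hchain
  obtain ⟨b1, hb1C, hb1⟩ := hC (Prod.fst '' c)
    (by rintro _ ⟨p, hp, rfl⟩; exact (hc hp).1) (hne.image _)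
    (by
      rintro _ ⟨p, hp, rfl⟩ _ ⟨q, hq, rfl⟩ hne'
      rcases eq_or_ne p q with rfl | h
      · exact absurd rfl hne'
      · rcases hchain hp hq h with h' | h'
        · exact Or.inl h'.1
        · exact Or.inr h'.1)
  obtain ⟨b2, hb2D, hb2⟩ := hD (Prod.snd '' c)
    (by rintro _ ⟨p, hp, rfl⟩; exact (hc hp).2) (hne.image _)
    (by
      rintro _ ⟨p, hp, rfl⟩ _ ⟨q, hq, rfl⟩ hne'
      rcases eq_or_ne p q with rfl | h
      · exact absurd rfl hne'
      · rcases hchain hp hq h with h' | h'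
        · exact Or.inl h'.2
        · exact Or.inr h'.2)
  refine ⟨(b1, b2), ⟨hb1C, hb2D⟩, ?_, ?_⟩
  · intro p hp
    exact ⟨hb1.1 ⟨p, hp, rfl⟩, hb2.1 ⟨p, hp, rfl⟩⟩
  · intro u hu
    refine ⟨hb1.2 ?_, hb2.2 ?_⟩
    · rintro _ ⟨p, hp, rfl⟩; exact (hu hp).1
    · rintro _ ⟨p, hp, rfl⟩; exact (hu hp).2

end AuxROEP

section AuxROEP2

variable {α : Type*} [PartialOrder α]

lemma exists_fixedPoint_ge {A : Set α} (hA : IsChainCompleteIn A) (f : α → α)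
    (hmaps : ∀ a ∈ A, f a ∈ A)
    (hmono : ∀ ⦃a⦄, a ∈ A → ∀ ⦃b⦄, b ∈ A → a ≤ b → f a ≤ f b)
    (a0 : α) (ha0 : a0 ∈ A) (h0 : a0 ≤ f a0) :
    ∃ m ∈ A, f m = m ∧ a0 ≤ m := by
  have hih : ∀ c ⊆ {a | a ∈ A ∧ a ≤ f a ∧ a0 ≤ a}, IsChain (· ≤ ·) c →
      ∃ ub ∈ {a | a ∈ A ∧ a ≤ f a ∧ a0 ≤ a}, ∀ z ∈ c, z ≤ ub := by
    intro c hcE hchain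
    rcases c.eq_empty_or_nonempty with rfl | hne
    · exact ⟨a0, ⟨ha0, h0, le_refl _⟩, by simp⟩
    obtain ⟨b, hbA, hb⟩ := hA c (fun x hx => (hcE hx).1) hne hchain
    have hbf : b ≤ f b := hb.2 fun x hx =>
      le_trans (hcE hx).2.1 (hmono (hcE hx).1 hbA (hb.1 hx))
    obtain ⟨x0, hx0⟩ := hne
    exact ⟨b, ⟨hbA, hbf, le_trans (hcE hx0).2.2 (hb.1 hx0)⟩, fun z hz => hb.1 hz⟩
  obtain ⟨m, hm⟩ := zorn_le₀ {a | a ∈ A ∧ a ≤ f a ∧ a0 ≤ a} hih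
  obtain ⟨hmA, hmf, hm0⟩ := hm.1
  have hfE : f m ∈ {a | a ∈ A ∧ a ≤ f a ∧ a0 ≤ a} :=
    ⟨hmaps _ hmA, hmono hmA (hmaps _ hmA) hmf, le_trans hm0 hmf⟩
  exact ⟨m, hmA, le_antisymm (hm.2 hfE hmf) hmf, hm0⟩

end AuxROEP2

/-- Corollary 3.4. -/
theorem ROEP_solvable_of_singleValued {X Y U : Type*} [PartialOrder X] [PartialOrder Y]
    [PartialOrder U]
    (C : Set X) (D : Set Y) (hCne : C.Nonempty) (hDne : D.Nonempty)
    (T : X → Y → U) (F : X → Set Y) (G : Y → Set X)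
    (hF : ∀ x ∈ C, (F x).Nonempty ∧ F x ⊆ D)
    (hG : ∀ y ∈ D, (G y).Nonempty ∧ G y ⊆ C)
    (hCcc : IsChainCompleteIn C) (hDcc : IsChainCompleteIn D)
    (phiHat : X → Y) (psiHat : Y → X)
    (hphiSingle : ∀ x ∈ C, ooPhi T F x = {phiHat x})
    (hpsiSingle : ∀ y ∈ D, ooPsi T G y = {psiHat y})
    (hphiMono : ∀ ⦃x₁⦄, x₁ ∈ C → ∀ ⦃x₂⦄, x₂ ∈ C → x₁ ≤ x₂ → phiHat x₁ ≤ phiHat x₂)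
    (hpsiMono : ∀ ⦃y₁⦄, y₁ ∈ D → ∀ ⦃y₂⦄, y₂ ∈ D → y₁ ≤ y₂ → psiHat y₁ ≤ psiHat y₂)
    (x' : X) (y' : Y) (hx' : x' ∈ C) (hy' : y' ∈ D)
    (hx'ψ : x' ≤ psiHat y') (hy'φ : y' ≤ phiHat x') :
    (SolSet T F G C D).Nonempty ∧ IsInductiveSet (SolSet T F G C D) ∧
      ∃ p : X × Y, Maximal (· ∈ SolSet T F G C D) p := by
  have hφF : ∀ x ∈ C, phiHat x ∈ ooPhi T F x := fun x hx => by
    rw [hphiSingle x hx]; rfl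
  have hψG : ∀ y ∈ D, psiHat y ∈ ooPsi T G y := fun y hy => by
    rw [hpsiSingle y hy]; rfl
  have hφD : ∀ x ∈ C, phiHat x ∈ D := fun x hx => (hF x hx).2 (hφF x hx).1
  have hψC : ∀ y ∈ D, psiHat y ∈ C := fun y hy => (hG y hy).2 (hψG y hy).1
  set A : Set (X × Y) := C ×ˢ D with hAdef
  have hAcc : IsChainCompleteIn A := prod_isChainCompleteIn hCcc hDcc
  set H : X × Y → X × Y := fun p => (psiHat p.2, phiHat p.1) with hHdef
  have hmaps : ∀ p ∈ A, H p ∈ A := fun p hp => ⟨hψC _ hp.2, hφD _ hp.1⟩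
  have hmono : ∀ ⦃p⦄, p ∈ A → ∀ ⦃q⦄, q ∈ A → p ≤ q → H p ≤ H q := fun p hp q hq hpq =>
    ⟨hpsiMono hp.2 hq.2 hpq.2, hphiMono hp.1 hq.1 hpq.1⟩
  have hSol : ∀ p : X × Y, p ∈ SolSet T F G C D ↔ p ∈ A ∧ H p = p := by
    intro p
    constructor
    · rintro ⟨h1, h2, h3, h4, h5, h6⟩
      have hx : p.1 ∈ ooPsi T G p.2 := ⟨h3, h5⟩
      have hy : p.2 ∈ ooPhi T F p.1 := ⟨h4, h6⟩
      rw [hpsiSingle _ h2, Set.mem_singleton_iff] at hx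
      rw [hphiSingle _ h1, Set.mem_singleton_iff] at hy
      exact ⟨⟨h1, h2⟩, Prod.ext hx.symm hy.symm⟩
    · rintro ⟨⟨h1, h2⟩, hH⟩
      have hx1 : psiHat p.2 = p.1 := congrArg Prod.fst hH
      have hy1 : phiHat p.1 = p.2 := congrArg Prod.snd hH
      have hx : p.1 ∈ ooPsi T G p.2 := hx1 ▸ hψG _ h2
      have hy : p.2 ∈ ooPhi T F p.1 := hy1 ▸ hφF _ h1
      exact ⟨h1, h2, hx.1, hy.1, hx.2, hy.2⟩
  obtain ⟨m0, hm0A, hm0f, -⟩ := exists_fixedPoint_ge hAcc H hmaps hmono (x', y')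
    ⟨hx', hy'⟩ ⟨hx'ψ, hy'φ⟩
  have hne : (SolSet T F G C D).Nonempty := ⟨m0, (hSol m0).2 ⟨hm0A, hm0f⟩⟩
  have hind : IsInductiveSet (SolSet T F G C D) := by
    intro c hc hcne hchain
    obtain ⟨b, hbA, hb⟩ := hAcc c (fun p hp => ((hSol p).1 (hc hp)).1) hcne hchain
    have hbf : b ≤ H b := hb.2 fun p hp => by
      have hps := (hSol p).1 (hc hp)
      calc p = H p := hps.2.symm
        _ ≤ H b := hmono hps.1 hbA (hb.1 hp)
    obtain ⟨m, hmA, hmf, hbm⟩ := exists_fixedPoint_ge hAcc H hmaps hmono b hbA hbf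
    exact ⟨m, (hSol m).2 ⟨hmA, hmf⟩, fun p hp => le_trans (hb.1 hp) hbm⟩
  refine ⟨hne, hind, ?_⟩
  apply zorn_le₀
  intro c hcS hchain
  rcases c.eq_empty_or_nonempty with rfl | hcne
  · obtain ⟨s, hs⟩ := hne
    exact ⟨s, hs, by simp⟩
  · obtain ⟨b, hbS, hb⟩ := hind c hcS hcne hchain
    exact ⟨b, hbS, hb⟩
end

section
/- Let (X,≤X), (Y,≤Y), (U,≤U) be posets, let C ⊆ X and D ⊆ Y be nonempty chain-complete subsets, and let T : C × D → U. Define Φ(x) = {z ∈ D : T(x,z) is a minimal element of {T(x,z') : z' ∈ D}} for x ∈ C and Ψ(y) = {u ∈ C : T(u,y) is a maximal element of {T(u',y) : u' ∈ C}} for y ∈ D. Suppose Φ and Ψ have nonempty values, are order-increasing upward, and Φ(x) is universally inductive in D for every x ∈ C while Ψ(y) is universally inductive in C for every y ∈ D. If there exist (x',y') ∈ C × D, u' ∈ Φ(x') and z' ∈ Ψ(y') with x' ≤X z' and y' ≤Y u', then the set of pairs (x*,y*) ∈ C × D such that T(x*,y*) is a maximal element of {T(x,y*) : x ∈ C} and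 a minimal element of {T(x*,y) : y ∈ D} is nonempty and inductive in C × D with the componentwise order, and this set has a maximal element. -/
private theorem OEP_key_fix {α : Type*} [PartialOrder α] (P : Set α)
    (hPcc : IsChainCompleteIn P)
    (F : α → Set α) (hFsub : ∀ p ∈ P, F p ⊆ P) (hFinc : IncUpwardOn P F)
    (hFUI : ∀ p ∈ P, IsUnivInductiveIn P (F p))
    (c₀ : Set α)
    (p₀ : α) (hp₀P : p₀ ∈ P) (hp₀ : ∃ q ∈ F p₀, p₀ ≤ q) (hp₀c : ∀ x ∈ c₀, x ≤ p₀) :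
    ∃ p ∈ P, p ∈ F p ∧ ∀ x ∈ c₀, x ≤ p := by
  set A : Set α := {p ∈ P | (∃ q ∈ F p, p ≤ q) ∧ ∀ x ∈ c₀, x ≤ p} with hA
  have hzorn : ∀ c ⊆ A, IsChain (· ≤ ·) c → ∀ y ∈ c, ∃ ub ∈ A, ∀ z ∈ c, z ≤ ub := by
    intro c hcA hchain y hy
    have hcP : c ⊆ P := fun x hx => (hcA hx).1
    obtain ⟨b, hbP, hbLUB⟩ := hPcc c hcP ⟨y, hy⟩ hchain
    have hbd : ∀ x ∈ c, ∃ a ∈ F b, x ≤ a := by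
      intro x hx
      obtain ⟨q, hq, hxq⟩ := (hcA hx).2.1
      obtain ⟨w, hw, hqw⟩ := hFinc (hcP hx) hbP (hbLUB.1 hx) q hq
      exact ⟨w, hw, hxq.trans hqw⟩
    obtain ⟨b', hb'F, hb'ub⟩ := hFUI b hbP c hcP ⟨y, hy⟩ hchain hbd
    have hbb' : b ≤ b' := hbLUB.2 hb'ub
    have hb'P : b' ∈ P := hFsub b hbP hb'F
    obtain ⟨w, hw, hb'w⟩ := hFinc hbP hb'P hbb' b' hb'F
    exact ⟨b', ⟨hb'P, ⟨w, hw, hb'w⟩,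
      fun x hx => ((hcA hy).2.2 x hx).trans (hb'ub y hy)⟩, hb'ub⟩
  have hp₀A : p₀ ∈ A := ⟨hp₀P, hp₀, hp₀c⟩
  obtain ⟨m, -, hmA, hmmax⟩ := zorn_le_nonempty₀ A hzorn p₀ hp₀A
  obtain ⟨hmP, ⟨q, hqF, hmq⟩, hmc⟩ := hmA
  have hqP : q ∈ P := hFsub m hmP hqF
  obtain ⟨w, hw, hqw⟩ := hFinc hmP hqP hmq q hqF
  have hqA : q ∈ A := ⟨hqP, ⟨w, hw, hqw⟩, fun x hx => (hmc x hx).trans hmq⟩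
  have : q = m := le_antisymm (hmmax hqA hmq) hmq
  exact ⟨m, hmP, this ▸ hqF, hmc⟩

/-- Corollary 3.5: the unconstrained ordered equilibrium problem
`OEP(T, C, D)`. -/
theorem OEP_solvable {X Y U : Type*} [PartialOrder X] [PartialOrder Y] [PartialOrder U]
    (C : Set X) (D : Set Y) (hCne : C.Nonempty) (hDne : D.Nonempty)
    (hCcc : IsChainCompleteIn C) (hDcc : IsChainCompleteIn D)
    (T : X → Y → U)
    (hPhiNe : ∀ x ∈ C,
      {z ∈ D | Minimal (· ∈ (fun z' => T x z') '' D) (T x z)}.Nonempty)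
    (hPsiNe : ∀ y ∈ D,
      {u ∈ C | Maximal (· ∈ (fun u' => T u' y) '' C) (T u y)}.Nonempty)
    (hPhiInc : IncUpwardOn C
      (fun x => {z ∈ D | Minimal (· ∈ (fun z' => T x z') '' D) (T x z)}))
    (hPsiInc : IncUpwardOn D
      (fun y => {u ∈ C | Maximal (· ∈ (fun u' => T u' y) '' C) (T u y)}))
    (hPhiUI : ∀ x ∈ C,
      IsUnivInductiveIn D {z ∈ D | Minimal (· ∈ (fun z' => T x z') '' D) (T x z)})
    (hPsiUI : ∀ y ∈ D,
      IsUnivInductiveIn C {u ∈ C | Maximal (· ∈ (fun u' => T u' y) '' C) (T u y)})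
    (x' : X) (y' : Y) (hx' : x' ∈ C) (hy' : y' ∈ D)
    (u' : Y) (hu' : u' ∈ {z ∈ D | Minimal (· ∈ (fun z' => T x' z') '' D) (T x' z)})
    (z' : X) (hz' : z' ∈ {u ∈ C | Maximal (· ∈ (fun u' => T u' y') '' C) (T u y')})
    (hx'z' : x' ≤ z') (hy'u' : y' ≤ u') :
    {p : X × Y | p.1 ∈ C ∧ p.2 ∈ D ∧
        Maximal (· ∈ (fun x => T x p.2) '' C) (T p.1 p.2) ∧
        Minimal (· ∈ (fun y => T p.1 y) '' D) (T p.1 p.2)}.Nonempty ∧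
      IsInductiveSet {p : X × Y | p.1 ∈ C ∧ p.2 ∈ D ∧
        Maximal (· ∈ (fun x => T x p.2) '' C) (T p.1 p.2) ∧
        Minimal (· ∈ (fun y => T p.1 y) '' D) (T p.1 p.2)} ∧
      ∃ p : X × Y, Maximal
        (· ∈ {p : X × Y | p.1 ∈ C ∧ p.2 ∈ D ∧
          Maximal (· ∈ (fun x => T x p.2) '' C) (T p.1 p.2) ∧
          Minimal (· ∈ (fun y => T p.1 y) '' D) (T p.1 p.2)}) p := by
  classical
  set Phi : X → Set Y :=
    fun x => {z ∈ D | Minimal (· ∈ (fun z' => T x z') '' D) (T x z)} with hPhi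
  set Psi : Y → Set X :=
    fun y => {u ∈ C | Maximal (· ∈ (fun u' => T u' y) '' C) (T u y)} with hPsi
  set P : Set (X × Y) := C ×ˢ D with hP
  set F : X × Y → Set (X × Y) := fun p => (Psi p.2) ×ˢ (Phi p.1) with hF
  set S : Set (X × Y) := {p : X × Y | p.1 ∈ C ∧ p.2 ∈ D ∧
      Maximal (· ∈ (fun x => T x p.2) '' C) (T p.1 p.2) ∧
      Minimal (· ∈ (fun y => T p.1 y) '' D) (T p.1 p.2)} with hS
  have hSF : ∀ p : X × Y, p ∈ S ↔ p ∈ F p := by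
    intro p
    constructor
    · rintro ⟨h1, h2, h3, h4⟩
      exact ⟨⟨h1, h3⟩, ⟨h2, h4⟩⟩
    · rintro ⟨⟨h1, h3⟩, ⟨h2, h4⟩⟩
      exact ⟨h1, h2, h3, h4⟩
  have hSP : S ⊆ P := fun p hp => ⟨hp.1, hp.2.1⟩
  have hchain_fst : ∀ c : Set (X × Y), IsChain (· ≤ ·) c →
      IsChain (· ≤ ·) (Prod.fst '' c) := by
    rintro c hc _ ⟨p, hp, rfl⟩ _ ⟨q, hq, rfl⟩ hne
    rcases hc hp hq (fun h => hne (congrArg Prod.fst h)) with h | h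
    · exact Or.inl h.1
    · exact Or.inr h.1
  have hchain_snd : ∀ c : Set (X × Y), IsChain (· ≤ ·) c →
      IsChain (· ≤ ·) (Prod.snd '' c) := by
    rintro c hc _ ⟨p, hp, rfl⟩ _ ⟨q, hq, rfl⟩ hne
    rcases hc hp hq (fun h => hne (congrArg Prod.snd h)) with h | h
    · exact Or.inl h.2
    · exact Or.inr h.2
  have hPcc : IsChainCompleteIn P := by
    intro c hcP hne hchain
    obtain ⟨b₁, hb₁C, hb₁⟩ := hCcc (Prod.fst '' c)
      (by rintro _ ⟨p, hp, rfl⟩; exact (hcP hp).1)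
      (hne.image _) (hchain_fst c hchain)
    obtain ⟨b₂, hb₂D, hb₂⟩ := hDcc (Prod.snd '' c)
      (by rintro _ ⟨p, hp, rfl⟩; exact (hcP hp).2)
      (hne.image _) (hchain_snd c hchain)
    refine ⟨(b₁, b₂), ⟨hb₁C, hb₂D⟩, ?_, ?_⟩
    · intro p hp
      exact ⟨hb₁.1 ⟨p, hp, rfl⟩, hb₂.1 ⟨p, hp, rfl⟩⟩
    · intro q hq
      refine ⟨hb₁.2 ?_, hb₂.2 ?_⟩
      · rintro _ ⟨p, hp, rfl⟩; exact (hq hp).1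
      · rintro _ ⟨p, hp, rfl⟩; exact (hq hp).2
  have hFsub : ∀ p ∈ P, F p ⊆ P := by
    rintro p ⟨hp1, hp2⟩ q ⟨hq1, hq2⟩
    exact ⟨hq1.1, hq2.1⟩
  have hFinc : IncUpwardOn P F := by
    rintro p₁ ⟨hp₁C, hp₁D⟩ p₂ ⟨hp₂C, hp₂D⟩ hle z ⟨hz1, hz2⟩
    obtain ⟨w₁, hw₁, hzw₁⟩ := hPsiInc hp₁D hp₂D hle.2 z.1 hz1
    obtain ⟨w₂, hw₂, hzw₂⟩ := hPhiInc hp₁C hp₂C hle.1 z.2 hz2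
    exact ⟨(w₁, w₂), ⟨hw₁, hw₂⟩, hzw₁, hzw₂⟩
  have hFUI : ∀ p ∈ P, IsUnivInductiveIn P (F p) := by
    rintro p ⟨hpC, hpD⟩ c hcP hne hchain hbd
    obtain ⟨b₁, hb₁, hb₁ub⟩ := hPsiUI p.2 hpD (Prod.fst '' c)
      (by rintro _ ⟨q, hq, rfl⟩; exact (hcP hq).1)
      (hne.image _) (hchain_fst c hchain)
      (by rintro _ ⟨q, hq, rfl⟩
          obtain ⟨a, ⟨ha1, ha2⟩, hqa⟩ := hbd q hq
          exact ⟨a.1, ha1, hqa.1⟩)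
    obtain ⟨b₂, hb₂, hb₂ub⟩ := hPhiUI p.1 hpC (Prod.snd '' c)
      (by rintro _ ⟨q, hq, rfl⟩; exact (hcP hq).2)
      (hne.image _) (hchain_snd c hchain)
      (by rintro _ ⟨q, hq, rfl⟩
          obtain ⟨a, ⟨ha1, ha2⟩, hqa⟩ := hbd q hq
          exact ⟨a.2, ha2, hqa.2⟩)
    exact ⟨(b₁, b₂), ⟨hb₁, hb₂⟩,
      fun q hq => ⟨hb₁ub q.1 ⟨q, hq, rfl⟩, hb₂ub q.2 ⟨q, hq, rfl⟩⟩⟩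
  have hSne : S.Nonempty := by
    obtain ⟨p, hpP, hpF, -⟩ := OEP_key_fix P hPcc F hFsub hFinc hFUI ∅
      (x', y') ⟨hx', hy'⟩ ⟨(z', u'), ⟨hz', hu'⟩, hx'z', hy'u'⟩ (fun x hx => hx.elim)
    exact ⟨p, (hSF p).2 hpF⟩
  have hSind : IsInductiveSet S := by
    intro c hcS hne hchain
    have hcP : c ⊆ P := fun x hx => hSP (hcS hx)
    obtain ⟨b, hbP, hbLUB⟩ := hPcc c hcP hne hchain
    have hbd : ∀ x ∈ c, ∃ a ∈ F b, x ≤ a := by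
      intro x hx
      obtain ⟨w, hw, hxw⟩ := hFinc (hcP hx) hbP (hbLUB.1 hx) x ((hSF x).1 (hcS hx))
      exact ⟨w, hw, hxw⟩
    obtain ⟨b', hb'F, hb'ub⟩ := hFUI b hbP c hcP hne hchain hbd
    have hbb' : b ≤ b' := hbLUB.2 hb'ub
    have hb'P : b' ∈ P := hFsub b hbP hb'F
    obtain ⟨w, hw, hb'w⟩ := hFinc hbP hb'P hbb' b' hb'F
    obtain ⟨p, hpP, hpF, hpub⟩ := OEP_key_fix P hPcc F hFsub hFinc hFUI c
      b' hb'P ⟨w, hw, hb'w⟩ hb'ub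
    exact ⟨p, (hSF p).2 hpF, hpub⟩
  refine ⟨hSne, hSind, ?_⟩
  obtain ⟨p₀, hp₀⟩ := hSne
  obtain ⟨m, -, hm⟩ := zorn_le_nonempty₀ S
    (fun c hcS hchain y hy => hSind c hcS ⟨y, hy⟩ hchain) p₀ hp₀
  exact ⟨m, hm⟩
end

section
/- Let X be a real Banach space equipped with the partial order induced by a closed convex pointed cone K ⊆ X (x ≤ y iff y − x ∈ K). Then every nonempty weakly compact subset A of X is chain-complete in X: every nonempty chain contained in A has a least upper bound in X, and this least upper bound belongs to A. -/
/-- Lemma 4.1, chain-completeness part: in a Banach space partially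
ordered by a closed convex pointed cone `K`, every nonempty weakly compact subset is
chain-complete. -/
theorem weaklyCompact_chainComplete {X : Type*}
    [NormedAddCommGroup X] [NormedSpace ℝ X] [CompleteSpace X]
    (K : Set X) (hKclosed : IsClosed K) (hKconvex : Convex ℝ K)
    (hKcone : ∀ ⦃c : ℝ⦄ ⦃x : X⦄, 0 < c → x ∈ K → c • x ∈ K)
    (hKpointed : K ∩ (-K) = {0})
    (A : Set X) (hAne : A.Nonempty) (hAcomp : IsCompact (toWeakSpace ℝ X '' A)) :
    ∀ c : Set X, c ⊆ A → c.Nonempty → IsChain (fun x y => y - x ∈ K) c →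
      ∃ b ∈ A, (∀ x ∈ c, b - x ∈ K) ∧
        ∀ b' : X, (∀ x ∈ c, b' - x ∈ K) → b' - b ∈ K := by
  intro c hcA hcne hchain
  -- 0 ∈ K
  have h0K : (0 : X) ∈ K := by
    have : (0 : X) ∈ K ∩ (-K) := by rw [hKpointed]; rfl
    exact this.1
  -- K is closed under addition
  have hKadd : ∀ {x y : X}, x ∈ K → y ∈ K → x + y ∈ K := by
    intro x y hx hy
    have hmid : (1/2 : ℝ) • x + (1/2 : ℝ) • y ∈ K :=
      hKconvex hx hy (by norm_num) (by norm_num) (by norm_num)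
    have := hKcone (show (0:ℝ) < 2 by norm_num) hmid
    simpa [smul_add, smul_smul] using this
  -- tails of the chain
  set T : X → Set X := fun x => {y ∈ c | y - x ∈ K} with hT
  have hmemT : ∀ {x : X}, x ∈ c → x ∈ T x := fun hx => ⟨hx, by simpa using h0K⟩
  -- tail filter
  haveI : Nonempty c := hcne.to_subtype
  set F : Filter X := ⨅ x : c, Filter.principal (T x) with hF
  have hTsub : ∀ {x y : X}, x ∈ c → y ∈ c → y - x ∈ K → T y ⊆ T x := by
    intro x y _ _ hxy z hz
    exact ⟨hz.1, by simpa using hKadd hz.2 hxy⟩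
  have hdir : Directed (· ≥ ·) fun x : c => Filter.principal (T x) := by
    intro x y
    rcases eq_or_ne (x : X) y with h | h
    · obtain rfl := Subtype.ext h; exact ⟨x, le_refl _, le_refl _⟩
    rcases hchain x.2 y.2 h with h' | h'
    · exact ⟨y, Filter.principal_mono.2 (hTsub x.2 y.2 h'), le_refl _⟩
    · exact ⟨x, le_refl _, Filter.principal_mono.2 (hTsub y.2 x.2 h')⟩
  haveI hFne : F.NeBot := Filter.iInf_neBot_of_directed' hdir
    (fun x => Filter.principal_neBot_iff.2 ⟨x, hmemT x.2⟩)
  have hTF : ∀ x : c, T x ∈ F := fun x => (Filter.le_principal_iff.1 (iInf_le _ x))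
  -- the mapped filter lives in the weakly compact image of A
  set G : Filter (WeakSpace ℝ X) := F.map (toWeakSpace ℝ X) with hG
  have hGle : G ≤ Filter.principal (toWeakSpace ℝ X '' A) := by
    obtain ⟨x0, hx0⟩ := hcne
    refine Filter.le_principal_iff.2 ?_
    exact Filter.image_mem_map (Filter.mem_of_superset (hTF ⟨x0, hx0⟩)
      (fun z hz => hcA hz.1))
  haveI : G.NeBot := Filter.map_neBot
  obtain ⟨b', hb'mem, hclus⟩ := hAcomp hGle
  obtain ⟨b, hbA, rfl⟩ := hb'mem
  -- key: the cluster point lies in every closed convex set belonging to F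
  have key : ∀ S : Set X, Convex ℝ S → IsClosed S → S ∈ F → b ∈ S := by
    intro S hSconv hSclosed hSF
    have himg : toWeakSpace ℝ X '' S ∈ G := Filter.image_mem_map hSF
    have hclosed' : IsClosed (toWeakSpace ℝ X '' S) := by
      rw [← closure_eq_iff_isClosed, ← hSconv.toWeakSpace_closure ℝ, hSclosed.closure_eq]
    have : ClusterPt (toWeakSpace ℝ X b) (Filter.principal (toWeakSpace ℝ X '' S)) :=
      hclus.mono (Filter.le_principal_iff.2 himg)
    have hmem : toWeakSpace ℝ X b ∈ toWeakSpace ℝ X '' S := by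
      have := mem_closure_iff_clusterPt.2 this
      rwa [hclosed'.closure_eq] at this
    obtain ⟨s, hs, hsb⟩ := hmem
    rwa [← (toWeakSpace ℝ X).injective hsb]
  refine ⟨b, hbA, ?_, ?_⟩
  · intro x hx
    have hSconv : Convex ℝ {y : X | y - x ∈ K} := by
      intro y1 hy1 y2 hy2 a b' ha hb hab
      have := hKconvex hy1 hy2 ha hb hab
      have heq : a • y1 + b' • y2 - x = a • (y1 - x) + b' • (y2 - x) := by
        rw [smul_sub, smul_sub]
        rw [show a • y1 - a • x + (b' • y2 - b' • x)
            = a • y1 + b' • y2 - (a • x + b' • x) by abel, ← add_smul, hab, one_smul]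
      simpa [Set.mem_setOf_eq, heq] using this
    have hSclosed : IsClosed {y : X | y - x ∈ K} :=
      hKclosed.preimage (continuous_id.sub continuous_const)
    exact key _ hSconv hSclosed
      (Filter.mem_of_superset (hTF ⟨x, hx⟩) (fun z hz => hz.2))
  · intro b' hb'
    have hSconv : Convex ℝ {y : X | b' - y ∈ K} := by
      intro y1 hy1 y2 hy2 a b'' ha hb hab
      have := hKconvex hy1 hy2 ha hb hab
      have heq : b' - (a • y1 + b'' • y2) = a • (b' - y1) + b'' • (b' - y2) := by
        rw [smul_sub, smul_sub]
        rw [show a • b' - a • y1 + (b'' • b' - b'' • y2)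
            = (a • b' + b'' • b') - (a • y1 + b'' • y2) by abel, ← add_smul, hab, one_smul]
      simpa [Set.mem_setOf_eq, heq] using this
    have hSclosed : IsClosed {y : X | b' - y ∈ K} :=
      hKclosed.preimage (continuous_const.sub continuous_id)
    obtain ⟨x0, hx0⟩ := hcne
    exact key _ hSconv hSclosed
      (Filter.mem_of_superset (hTF ⟨x0, hx0⟩) (fun z hz => hb' z hz.1))
end

section
/- Let X be a real Banach space equipped with the partial order induced by a closed convex pointed cone K ⊆ X (x ≤ y iff y − x ∈ K). Then every nonempty weakly compact subset A of X is universally inductive in X: every nonempty chain in X, each of whose elements is bounded above by some element of A, has an upper bound belonging to A. -/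
/-- Lemma 4.1, universal inductivity part: in a Banach space partially
ordered by a closed convex pointed cone `K`, every nonempty weakly compact subset is
universally inductive. -/
theorem weaklyCompact_univInductive {X : Type*}
    [NormedAddCommGroup X] [NormedSpace ℝ X] [CompleteSpace X]
    (K : Set X) (hKclosed : IsClosed K) (hKconvex : Convex ℝ K)
    (hKcone : ∀ ⦃c : ℝ⦄ ⦃x : X⦄, 0 < c → x ∈ K → c • x ∈ K)
    (hKpointed : K ∩ (-K) = {0})
    (A : Set X) (hAne : A.Nonempty) (hAcomp : IsCompact (toWeakSpace ℝ X '' A)) :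
    ∀ c : Set X, c.Nonempty → IsChain (fun x y => y - x ∈ K) c →
      (∀ x ∈ c, ∃ a ∈ A, a - x ∈ K) → ∃ b ∈ A, ∀ x ∈ c, b - x ∈ K := by
  classical
  intro c hcne hchain hub
  -- basic facts about K
  have h0 : (0 : X) ∈ K := by
    have : (0 : X) ∈ K ∩ (-K) := hKpointed ▸ Set.mem_singleton 0
    exact this.1
  have hadd : ∀ {u v : X}, u ∈ K → v ∈ K → u + v ∈ K := by
    intro u v hu hv
    have hmid : (1/2 : ℝ) • u + (1/2 : ℝ) • v ∈ K :=
      hKconvex hu hv (by norm_num) (by norm_num) (by norm_num)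
    have := hKcone (show (0:ℝ) < 2 by norm_num) hmid
    have heq : (2:ℝ) • ((1/2 : ℝ) • u + (1/2 : ℝ) • v) = u + v := by
      rw [smul_add, smul_smul, smul_smul]; norm_num
    rwa [heq] at this
  have htrans : ∀ {x y z : X}, y - x ∈ K → z - y ∈ K → z - x ∈ K := by
    intro x y z h1 h2
    have := hadd h2 h1
    rwa [sub_add_sub_cancel] at this
  -- the weakly closed "up-sets"
  set T : X → Set (WeakSpace ℝ X) := fun x => toWeakSpace ℝ X '' {a | a - x ∈ K} with hT
  have hTclosed : ∀ x, IsClosed (T x) := by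
    intro x
    have hconv : Convex ℝ {a : X | a - x ∈ K} := by
      intro a ha b hb s t hs ht hst
      show s • a + t • b - x ∈ K
      have hm := hKconvex ha hb hs ht hst
      have h1 : s • x + t • x = x := by rw [← add_smul, hst, one_smul]
      have heq : s • (a - x) + t • (b - x) = s • a + t • b - x := by
        calc s • (a - x) + t • (b - x) = s • a + t • b - (s • x + t • x) := by
              rw [smul_sub, smul_sub]; abel
          _ = s • a + t • b - x := by rw [h1]
      rwa [heq] at hm
    have hcl : IsClosed {a : X | a - x ∈ K} :=
      hKclosed.preimage (continuous_id.sub continuous_const)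
    have hcc := hconv.toWeakSpace_closure (𝕜 := ℝ)
    rw [hcl.closure_eq] at hcc
    show IsClosed (toWeakSpace ℝ X '' {a | a - x ∈ K})
    rw [hcc]
    exact isClosed_closure
  -- finite subfamilies of the T's meet A: find a greatest element of a finite subset of c
  have hmax : ∀ t : Finset X, ↑t ⊆ c → t.Nonempty →
      ∃ m ∈ t, ∀ x ∈ t, m - x ∈ K := by
    intro t
    induction t using Finset.induction_on with
    | empty => intro _ h; exact absurd h (by simp)
    | @insert j t hj ih =>
      intro hsub _
      have hjc : j ∈ c := hsub (Finset.mem_insert_self j t)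
      have htsub : ↑t ⊆ c := fun x hx => hsub (Finset.mem_insert_of_mem hx)
      rcases t.eq_empty_or_nonempty with rfl | htne
      · refine ⟨j, Finset.mem_insert_self j _, ?_⟩
        intro x hx
        simp only [Finset.mem_insert, Finset.notMem_empty, or_false] at hx
        subst hx; simpa using h0
      · obtain ⟨m, hmt, hm⟩ := ih htsub htne
        have hmc : m ∈ c := htsub hmt
        by_cases hjm : j = m
        · subst hjm
          exact ⟨j, Finset.mem_insert_self _ _, fun x hx => by
            rcases Finset.mem_insert.mp hx with rfl | hx
            · simpa using h0
            · exact hm x hx⟩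
        · rcases hchain hjc hmc hjm with hle | hle
          · -- m - j ∈ K : m is still greatest
            refine ⟨m, Finset.mem_insert_of_mem hmt, fun x hx => ?_⟩
            rcases Finset.mem_insert.mp hx with rfl | hx
            · exact hle
            · exact hm x hx
          · -- j - m ∈ K : j is greatest
            refine ⟨j, Finset.mem_insert_self _ _, fun x hx => ?_⟩
            rcases Finset.mem_insert.mp hx with rfl | hx
            · simpa using h0
            · exact htrans (hm x hx) hle
  have key : ((toWeakSpace ℝ X '' A) ∩ ⋂ i : ↥c, T ↑i).Nonempty := by
    refine hAcomp.inter_iInter_nonempty (fun i : ↥c => T ↑i) (fun i => hTclosed _) ?_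
    intro u
    rcases u.eq_empty_or_nonempty with rfl | hune
    · obtain ⟨a, ha⟩ := hAne
      exact ⟨toWeakSpace ℝ X a, ⟨a, ha, rfl⟩,
        Set.mem_iInter₂.mpr fun i hi => absurd hi (Finset.notMem_empty i)⟩
    · -- map u to a finite subset of X
      have hvne : (u.image (fun i : ↥c => (i : X))).Nonempty := hune.image _
      have hvsub : ↑(u.image (fun i : ↥c => (i : X))) ⊆ c := by
        intro x hx
        simp only [Finset.coe_image, Set.mem_image] at hx
        obtain ⟨i, _, rfl⟩ := hx
        exact i.2
      obtain ⟨m, hmu, hm⟩ := hmax _ hvsub hvne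
      have hmc : m ∈ c := hvsub hmu
      obtain ⟨a, haA, haK⟩ := hub m hmc
      refine ⟨toWeakSpace ℝ X a, ⟨a, haA, rfl⟩, ?_⟩
      refine Set.mem_iInter₂.mpr fun i hi => ?_
      exact ⟨a, htrans (hm _ (Finset.mem_image_of_mem _ hi)) haK, rfl⟩
  obtain ⟨w, ⟨a, haA, rfl⟩, hw⟩ := key
  refine ⟨a, haA, fun x hx => ?_⟩
  have := Set.mem_iInter.mp hw ⟨x, hx⟩
  obtain ⟨a', ha', heq⟩ := this
  have : a' = a := (toWeakSpace ℝ X).injective heq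
  exact this ▸ ha'
end

section
/- Let (P,≤P) and (Q,≤Q) be posets, let A ⊆ P be universally inductive in P and B ⊆ Q be universally inductive in Q. Then A × B is universally inductive in P × Q with the componentwise partial order: every nonempty chain in P × Q, each of whose elements is bounded above by some element of A × B, has an upper bound belonging to A × B. -/
namespace IsUnivInductiveIn

variable {α β : Type*} [Preorder α] [Preorder β]

theorem exists_mem_forall_map_le {S A : Set α} {T B : Set β} (hB : IsUnivInductiveIn T B)
    {f : α → β} (hf : Monotone f) (hST : Set.MapsTo f S T) (hAB : Set.MapsTo f A B)
    {c : Set α} (hcS : c ⊆ S) (hne : c.Nonempty) (hc : IsChain (· ≤ ·) c)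
    (hcA : ∀ x ∈ c, ∃ a ∈ A, x ≤ a) : ∃ b ∈ B, ∀ x ∈ c, f x ≤ b := by
  have hfc : IsChain (· ≤ ·) (f '' c) := hc.image_of_map_rel _ _ f fun _ _ h => hf h
  have hfcA : ∀ y ∈ f '' c, ∃ b ∈ B, y ≤ b := by
    rintro _ ⟨x, hx, rfl⟩
    obtain ⟨a, ha, hxa⟩ := hcA x hx
    exact ⟨f a, hAB ha, hf hxa⟩
  obtain ⟨b, hb, hub⟩ :=
    hB (f '' c) ((Set.image_mono hcS).trans hST.image_subset) (hne.image f) hfc hfcA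
  exact ⟨b, hb, fun x hx => hub _ (Set.mem_image_of_mem f hx)⟩

theorem prod_s16 {S A : Set α} {T B : Set β} (hA : IsUnivInductiveIn S A)
    (hB : IsUnivInductiveIn T B) : IsUnivInductiveIn (S ×ˢ T) (A ×ˢ B) := by
  intro c hcST hne hc hcAB
  obtain ⟨a, ha, hca⟩ := hA.exists_mem_forall_map_le monotone_fst Set.mapsTo_fst_prod
    Set.mapsTo_fst_prod hcST hne hc hcAB
  obtain ⟨b, hb, hcb⟩ := hB.exists_mem_forall_map_le monotone_snd Set.mapsTo_snd_prod
    Set.mapsTo_snd_prod hcST hne hc hcAB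
  exact ⟨(a, b), ⟨ha, hb⟩, fun x hx => ⟨hca x hx, hcb x hx⟩⟩

end IsUnivInductiveIn

/-- the product of universally inductive subsets is universally
inductive in the product poset. -/
theorem prod_univInductive {P Q : Type*} [PartialOrder P] [PartialOrder Q]
    (A : Set P) (B : Set Q)
    (hA : IsUnivInductiveIn Set.univ A) (hB : IsUnivInductiveIn Set.univ B) :
    IsUnivInductiveIn Set.univ (A ×ˢ B) := by
  simpa only [Set.univ_prod_univ] using hA.prod_s16 hB
end
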